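/- arXiv:0906.0988 — 2 statements merged into one kernel-verified Lean document; each statement's English description precedes it below -/
import Mathlib

section
/- Noncommutative-to-commutative symmetrization: let {u(α), x(α), y(α) : α ∈ F_d} be a trajectory of the noncommutative Fornasini-Marchesini system x(k·α) = A_k x(α) + B_k u(α), y(α) = Cx(α) + Du(α). Define for n ∈ ℤ₊^d the aggregates ū(n) = ∑_{a(α)=n} u(α), x̄(n) = ∑_{a(α)=n} x(α), ȳ(n) = ∑_{a(α)=n} y(α), where a : F_d → ℤ₊^d is the abelianization map counting letter occurrences. Then (ū, x̄, ȳ) satisfies the commutative Fornasini-Marchesini system equations: x̄(n) = ∑_{k=1}^d A_k x̄(n−e_k) + ∑_{k=1}^d B_k ū(n−e_k) for n ≠ 0, and ȳ(n) = C x̄(n) + D ū(n). -/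
open scoped BigOperators

/-- The aggregate (symmetrization) `f̄(n) = ∑_{a(α)=n} f(α)` of a function on the free
monoid `F_d` (words modelled as lists, enumerated via `List.ofFn`), defined on `ℤ^d`
with the convention `f̄(m) = 0` for `m ∉ ℤ₊^d`.  Here `a` is the abelianization
(letter-count) map, so that words with `a(α) = n` have length `|n| = ∑ j, n j`. -/
noncomputable def aggregate {d : ℕ} {V : Type*} [AddCommMonoid V]
    (f : List (Fin d) → V) (n : Fin d → ℤ) : V :=
  if (∀ j, 0 ≤ n j) then
    ∑ w ∈ Finset.univ.filter
        (fun w : Fin (∑ j, (n j).toNat) → Fin d =>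
          ∀ j, (List.ofFn w).count j = (n j).toNat),
      f (List.ofFn w)
  else 0

lemma aggregate_eq_of_len {d : ℕ} {V : Type*} [AddCommMonoid V]
    (f : List (Fin d) → V) (n : Fin d → ℤ) (hn : ∀ j, 0 ≤ n j)
    (N : ℕ) (hN : ∑ j, (n j).toNat = N) :
    aggregate f n = ∑ w ∈ Finset.univ.filter
        (fun w : Fin N → Fin d => ∀ j, (List.ofFn w).count j = (n j).toNat),
      f (List.ofFn w) := by
  subst hN
  simp [aggregate, hn]

lemma aggregate_map {d : ℕ} {F V W : Type*} [AddCommMonoid V] [AddCommMonoid W]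
    [FunLike F V W] [AddMonoidHomClass F V W] (g : F) (f : List (Fin d) → V) (n : Fin d → ℤ) :
    aggregate (fun α => g (f α)) n = g (aggregate f n) := by
  unfold aggregate; split <;> simp

lemma aggregate_add {d : ℕ} {V : Type*} [AddCommMonoid V]
    (f g : List (Fin d) → V) (n : Fin d → ℤ) :
    aggregate (fun α => f α + g α) n = aggregate f n + aggregate g n := by
  unfold aggregate; split <;> simp [Finset.sum_add_distrib]
lemma aggregate_cons {d : ℕ} {V : Type*} [AddCommMonoid V]
    (f : List (Fin d) → V) (n : Fin d → ℤ) (hn : ∀ j, 0 ≤ n j) (h0 : n ≠ 0) :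
    aggregate f n = ∑ k, aggregate (fun α => f (k :: α)) (n - Pi.single k 1) := by
  classical
  have hNpos : ∑ j, (n j).toNat ≠ 0 := by
    intro h
    apply h0
    funext j
    have h1 := Finset.sum_eq_zero_iff.mp h j (Finset.mem_univ j)
    have h2 := hn j
    have : n j = 0 := by omega
    simpa using this
  obtain ⟨M, hM⟩ := Nat.exists_eq_succ_of_ne_zero hNpos
  rw [aggregate_eq_of_len f n hn (M + 1) hM]
  rw [← Finset.sum_fiberwise _ (fun w : Fin (M + 1) → Fin d => w 0)
      (fun w => f (List.ofFn w))]
  apply Finset.sum_congr rfl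
  intro k _
  by_cases hk : 1 ≤ n k
  · have hn' : ∀ j, 0 ≤ (n - Pi.single k 1 : Fin d → ℤ) j := by
      intro j
      rcases eq_or_ne j k with h | h
      · subst h; simp [Pi.single_apply]; omega
      · simp only [Pi.sub_apply, Pi.single_apply, if_neg h, sub_zero]; exact hn j
    have hcount : ∀ j, ((n - Pi.single k 1 : Fin d → ℤ) j).toNat
        = (n j).toNat - (if j = k then 1 else 0) := by
      intro j
      have := hn j
      rcases eq_or_ne j k with h | h
      · subst h
        simp [Pi.single_apply]
      · simp [Pi.sub_apply, Pi.single_apply, h]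
    have hsum : ∑ j, ((n - Pi.single k 1 : Fin d → ℤ) j).toNat = M := by
      have h1 : ∀ j, (n j).toNat = ((n - Pi.single k 1 : Fin d → ℤ) j).toNat
          + (if j = k then 1 else 0) := by
        intro j
        have := hn j
        rw [hcount]
        rcases eq_or_ne j k with h | h
        · subst h; simp; omega
        · simp [h]
      have h2 : ∑ j, (n j).toNat
          = (∑ j, ((n - Pi.single k 1 : Fin d → ℤ) j).toNat)
            + ∑ j : Fin d, (if j = k then 1 else 0) := by
        rw [← Finset.sum_add_distrib]
        exact Finset.sum_congr rfl fun j _ => h1 j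
      rw [Finset.sum_ite_eq' Finset.univ k (fun _ => 1)] at h2
      simp only [Finset.mem_univ, if_true] at h2
      omega
    rw [aggregate_eq_of_len _ _ hn' M hsum]
    refine Finset.sum_nbij' (i := fun w => fun i : Fin M => w i.succ)
      (j := fun v => Fin.cons k v) ?_ ?_ ?_ ?_ ?_
    · intro w hw
      simp only [Finset.mem_filter, Finset.mem_univ, true_and] at hw ⊢
      obtain ⟨hP, hw0⟩ := hw
      intro j
      have hc := hP j
      rw [List.ofFn_succ, hw0, List.count_cons] at hc
      rw [hcount]
      rcases eq_or_ne j k with h | h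
      · subst h; simp at hc ⊢; omega
      · simp [h, Ne.symm h] at hc ⊢; omega
    · intro v hv
      simp only [Finset.mem_filter, Finset.mem_univ, true_and] at hv ⊢
      constructor
      · intro j
        have hQ := hv j
        rw [hcount] at hQ
        rw [List.ofFn_succ]
        simp only [Fin.cons_zero, Fin.cons_succ, List.count_cons]
        rcases eq_or_ne j k with h | h
        · subst h
          simp at hQ ⊢
          have := hn j
          have hQ' : List.count j (List.ofFn fun i => v i) = (n j).toNat - 1 := hQ
          omega
        · simp [h, Ne.symm h, hQ]
      · simp
    · intro w hw
      simp only [Finset.mem_filter, Finset.mem_univ, true_and] at hw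
      funext i
      induction i using Fin.cases with
      | zero => simp [hw.2]
      | succ i => simp
    · intro v _
      funext i
      simp
    · intro w hw
      simp only [Finset.mem_filter, Finset.mem_univ, true_and] at hw
      rw [List.ofFn_succ, hw.2]
  · have hk0 : n k = 0 := by have := hn k; omega
    have hz : aggregate (fun α => f (k :: α)) (n - Pi.single k 1) = 0 := by
      rw [aggregate, if_neg]
      push_neg
      refine ⟨k, ?_⟩
      simp only [Pi.sub_apply, Pi.single_apply, if_pos rfl, hk0]
      norm_num
    rw [hz]
    apply Finset.sum_eq_zero
    intro w hw
    exfalso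
    simp only [Finset.mem_filter, Finset.mem_univ, true_and] at hw
    obtain ⟨hP, hw0⟩ := hw
    have hmem : k ∈ List.ofFn w := by
      rw [List.ofFn_succ, hw0]; exact List.mem_cons_self
    have hpos : 0 < (List.ofFn w).count k := List.count_pos_iff.mpr hmem
    have hc := hP k
    rw [hk0] at hc
    omega


/-- Symmetrization of a noncommutative Fornasini-Marchesini trajectory yields a
trajectory of the commutative Fornasini-Marchesini system. -/
theorem stmt_6 {d : ℕ} {X U Y : Type*}
    [NormedAddCommGroup X] [InnerProductSpace ℂ X] [CompleteSpace X]
    [NormedAddCommGroup U] [InnerProductSpace ℂ U] [CompleteSpace U]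
    [NormedAddCommGroup Y] [InnerProductSpace ℂ Y] [CompleteSpace Y]
    (A : Fin d → X →L[ℂ] X) (B : Fin d → U →L[ℂ] X)
    (C : X →L[ℂ] Y) (D : U →L[ℂ] Y)
    (x : List (Fin d) → X) (u : List (Fin d) → U) (y : List (Fin d) → Y)
    (hrec : ∀ (k : Fin d) (α : List (Fin d)), x (k :: α) = A k (x α) + B k (u α))
    (hy : ∀ α : List (Fin d), y α = C (x α) + D (u α)) :
    (∀ n : Fin d → ℤ, (∀ j, 0 ≤ n j) → n ≠ 0 →
      aggregate x n
        = ∑ k, A k (aggregate x (n - Pi.single k 1))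
          + ∑ k, B k (aggregate u (n - Pi.single k 1)))
    ∧ (∀ n : Fin d → ℤ, (∀ j, 0 ≤ n j) →
        aggregate y n = C (aggregate x n) + D (aggregate u n)) := by
  constructor
  · intro n hn h0
    rw [aggregate_cons x n hn h0, ← Finset.sum_add_distrib]
    refine Finset.sum_congr rfl fun k _ => ?_
    have e1 : (fun α => x (k :: α)) = fun α => A k (x α) + B k (u α) :=
      funext (hrec k)
    rw [e1, aggregate_add, aggregate_map (A k) x, aggregate_map (B k) u]
  · intro n _
    have e : y = fun α => C (x α) + D (u α) := funext hy
    rw [e, aggregate_add, aggregate_map C x, aggregate_map D u]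
end

section
/- Input/output operator is contractive: for a dissipative system with contractive system matrix [[A₁;…;A_d;B₁;…;B_d],[C,D]] : X⊕U → X^d⊕U, the block lower-triangular operator row [T_Σ W_Σ], where T_Σ maps input sequences to output sequences (Toeplitz-like operator with symbol entries D on the diagonal and C·(products of A's)·B below) and W_Σ x₀ = (C A^α x₀)_{α∈F_d} is the observation operator, defines a contraction from ℓ²_U(F_d) ⊕ X to ℓ²_U(F_d); in particular ‖y‖² ≤ ‖u‖² + ‖x(0)‖² for any ℓ² input u and initial state x(0). -/
open scoped BigOperators

/-- Words of length `n` over `Fin d`, as a `Finset`. -/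
def Wd (d : ℕ) : ℕ → Finset (List (Fin d))
  | 0 => {[]}
  | n + 1 => Finset.univ.biUnion fun k : Fin d => (Wd d n).image (k :: ·)

lemma mem_Wd {d n : ℕ} {α : List (Fin d)} : α ∈ Wd d n ↔ α.length = n := by
  induction n generalizing α with
  | zero => simp [Wd, List.length_eq_zero_iff]
  | succ n ih =>
    simp only [Wd, Finset.mem_biUnion, Finset.mem_image, Finset.mem_univ, true_and]
    constructor
    · rintro ⟨k, β, hβ, rfl⟩; simp [ih.mp hβ]
    · intro h
      cases α with
      | nil => simp at h
      | cons k β => exact ⟨k, β, ih.mpr (by simpa using h), rfl⟩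

lemma sum_Wd_succ {d : ℕ} (f : List (Fin d) → ℝ) (n : ℕ) :
    ∑ α ∈ Wd d (n + 1), f α = ∑ α ∈ Wd d n, ∑ k : Fin d, f (k :: α) := by
  have hdisj : ∀ k ∈ (Finset.univ : Finset (Fin d)), ∀ k' ∈ (Finset.univ : Finset (Fin d)),
      k ≠ k' → Disjoint ((Wd d n).image (k :: ·)) ((Wd d n).image (k' :: ·)) := by
    intro k _ k' _ hkk'
    simp only [Finset.disjoint_left, Finset.mem_image]
    rintro a ⟨b, _, rfl⟩ ⟨c, _, hc⟩
    exact hkk' (by injection hc.symm)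
  calc ∑ α ∈ Wd d (n + 1), f α
      = ∑ k : Fin d, ∑ α ∈ (Wd d n).image (k :: ·), f α := Finset.sum_biUnion hdisj
    _ = ∑ k : Fin d, ∑ α ∈ Wd d n, f (k :: α) :=
        Finset.sum_congr rfl fun k _ => Finset.sum_image fun a _ b _ h => by simpa using h
    _ = ∑ α ∈ Wd d n, ∑ k : Fin d, f (k :: α) := Finset.sum_comm

/-- The input/output-plus-observation operator `[T_Σ  W_Σ]` of a dissipative
noncommutative Fornasini-Marchesini system is a contraction from `ℓ²_U(F_d) ⊕ X` to
`ℓ²_U(F_d)`: for any `ℓ²` input `u` and initial state `x(∅)`, the output `y` is in `ℓ²`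
and `‖y‖² ≤ ‖u‖² + ‖x(∅)‖²`. -/
theorem stmt_15 {d : ℕ} {X U : Type*}
    [NormedAddCommGroup X] [InnerProductSpace ℂ X] [CompleteSpace X]
    [NormedAddCommGroup U] [InnerProductSpace ℂ U] [CompleteSpace U]
    (A : Fin d → X →L[ℂ] X) (B : Fin d → U →L[ℂ] X)
    (C : X →L[ℂ] U) (D : U →L[ℂ] U)
    -- the system matrix `[[A_k ; B_k], [C, D]] : X ⊕ U → X^d ⊕ U` is contractive:
    (hcontr : ∀ (ξ : X) (υ : U),
      (∑ k, ‖A k ξ + B k υ‖ ^ 2) + ‖C ξ + D υ‖ ^ 2 ≤ ‖ξ‖ ^ 2 + ‖υ‖ ^ 2)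
    (x : List (Fin d) → X) (u y : List (Fin d) → U)
    (hrec : ∀ (k : Fin d) (α : List (Fin d)), x (k :: α) = A k (x α) + B k (u α))
    (hy : ∀ α : List (Fin d), y α = C (x α) + D (u α))
    -- the input lies in `ℓ²_U(F_d)`:
    (hu : Summable fun α : List (Fin d) => ‖u α‖ ^ 2) :
    (Summable fun α : List (Fin d) => ‖y α‖ ^ 2)
    ∧ (∑' α : List (Fin d), ‖y α‖ ^ 2)
        ≤ (∑' α : List (Fin d), ‖u α‖ ^ 2) + ‖x []‖ ^ 2 := by
  -- energy sums over words of fixed length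
  set S : ℕ → ℝ := fun n => ∑ α ∈ Wd d n, ‖x α‖ ^ 2 with hS
  set Y : ℕ → ℝ := fun n => ∑ α ∈ Wd d n, ‖y α‖ ^ 2 with hY
  set V : ℕ → ℝ := fun n => ∑ α ∈ Wd d n, ‖u α‖ ^ 2 with hV
  -- one-step dissipation inequality (summed over words of length n)
  have step : ∀ n, Y n + S (n + 1) ≤ S n + V n := by
    intro n
    simp only [hS, hY, hV, sum_Wd_succ (fun α => ‖x α‖ ^ 2) n]
    rw [← Finset.sum_add_distrib, ← Finset.sum_add_distrib]
    refine Finset.sum_le_sum fun α _ => ?_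
    have := hcontr (x α) (u α)
    simp only [← hrec, ← hy] at this
    linarith
  -- telescoping
  have tele : ∀ N, (∑ m ∈ Finset.range (N + 1), Y m) + S (N + 1)
      ≤ S 0 + ∑ m ∈ Finset.range (N + 1), V m := by
    intro N
    induction N with
    | zero => simpa using step 0
    | succ N ih =>
      have := step (N + 1)
      rw [Finset.sum_range_succ, Finset.sum_range_succ (f := V)]
      linarith
  have hSnonneg : ∀ n, 0 ≤ S n := fun n =>
    Finset.sum_nonneg fun _ _ => sq_nonneg _
  have hS0 : S 0 = ‖x []‖ ^ 2 := by simp [hS, Wd]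
  -- partial sums over ranges bound by the input tsum
  have hVsum : ∀ N, ∑ m ∈ Finset.range (N + 1), V m ≤ ∑' α, ‖u α‖ ^ 2 := by
    intro N
    have hdisj : ∀ m ∈ Finset.range (N + 1), ∀ m' ∈ Finset.range (N + 1), m ≠ m' →
        Disjoint (Wd d m) (Wd d m') := by
      intro m _ m' _ hmm'
      simp only [Finset.disjoint_left]
      intro a ha ha'
      exact hmm' ((mem_Wd.mp ha).symm.trans (mem_Wd.mp ha'))
    rw [hV, ← Finset.sum_biUnion hdisj]
    exact Summable.sum_le_tsum _ (fun _ _ => sq_nonneg _) hu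
  -- every finset sum of ‖y‖² is bounded
  have key : ∀ s : Finset (List (Fin d)),
      ∑ α ∈ s, ‖y α‖ ^ 2 ≤ (∑' α, ‖u α‖ ^ 2) + ‖x []‖ ^ 2 := by
    intro s
    set N := s.sup List.length with hN
    have hsub : s ⊆ (Finset.range (N + 1)).biUnion (Wd d) := by
      intro α hα
      simp only [Finset.mem_biUnion, Finset.mem_range]
      exact ⟨α.length, Nat.lt_succ_of_le (Finset.le_sup hα), mem_Wd.mpr rfl⟩
    have hdisj : ∀ m ∈ Finset.range (N + 1), ∀ m' ∈ Finset.range (N + 1), m ≠ m' →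
        Disjoint (Wd d m) (Wd d m') := by
      intro m _ m' _ hmm'
      simp only [Finset.disjoint_left]
      intro a ha ha'
      exact hmm' ((mem_Wd.mp ha).symm.trans (mem_Wd.mp ha'))
    calc ∑ α ∈ s, ‖y α‖ ^ 2
        ≤ ∑ α ∈ (Finset.range (N + 1)).biUnion (Wd d), ‖y α‖ ^ 2 :=
          Finset.sum_le_sum_of_subset_of_nonneg hsub fun _ _ _ => sq_nonneg _
      _ = ∑ m ∈ Finset.range (N + 1), Y m := Finset.sum_biUnion hdisj
      _ ≤ (∑ m ∈ Finset.range (N + 1), Y m) + S (N + 1) := le_add_of_nonneg_right (hSnonneg _)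
      _ ≤ S 0 + ∑ m ∈ Finset.range (N + 1), V m := tele N
      _ ≤ ‖x []‖ ^ 2 + ∑' α, ‖u α‖ ^ 2 := by rw [hS0]; exact add_le_add_right (hVsum N) _
      _ = (∑' α, ‖u α‖ ^ 2) + ‖x []‖ ^ 2 := add_comm _ _
  have hsummable : Summable fun α : List (Fin d) => ‖y α‖ ^ 2 :=
    summable_of_sum_le (fun _ => sq_nonneg _) key
  exact ⟨hsummable, Summable.tsum_le_of_sum_le hsummable key⟩
end
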